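/- Maximizing the Shannon entropy -Σ p_k ln p_k over probability distributions (p_{Φ+}, p_{Ψ-}, p_{Φ-}, p_{Ψ+}) subject to the constraint p_{Φ+} - p_{Ψ-} = b with |b| ≤ 1 yields the unique maximizer with p_{Φ-} = p_{Ψ+} = (1-b^2)/4, p_{Φ+} = (1+b)^2/4, p_{Ψ-} = (1-b)^2/4. -/

import Mathlib

/-!
The constraint functions are `1` and `p ↦ p 0 - p 1`, and `log (pstar b)` is a linear
combination of them: with `a = log ((1 + b) / 2)` and `c = log ((1 - b) / 2)` it equals
`(2a, 2c, a + c, a + c)`.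
Hence the cross entropy `∑ p k * log (pstar b k)` takes the same value on every feasible `p`, and
Gibbs' inequality `∑ p log pstar ≤ ∑ p log p`, strict unless `p = pstar b`, gives the claim.
For `|b| = 1` the feasible set is the single point `pstar b`.
-/

/-- The Shannon-MaxEnt eigenvalues for the Bell-CHSH constraint:
(p_{Φ+}, p_{Ψ-}, p_{Φ-}, p_{Ψ+}) = ((1+b)²/4, (1-b)²/4, (1-b²)/4, (1-b²)/4). -/
noncomputable def pstar (b : ℝ) : Fin 4 → ℝ :=
  ![(1 + b) ^ 2 / 4, (1 - b) ^ 2 / 4, (1 - b ^ 2) / 4, (1 - b ^ 2) / 4]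

open Real Finset

lemma mul_log_sub_mul_log_lt {p q : ℝ} (hp : 0 ≤ p) (hq : 0 < q) (hpq : p ≠ q) :
    p * log q - p * log p < q - p := by
  rcases hp.eq_or_lt with rfl | hp
  · simpa using hq
  · have hqp : q / p ≠ 1 := fun h => hpq ((div_eq_one_iff_eq hp.ne').mp h).symm
    have := mul_lt_mul_of_pos_left (log_lt_sub_one_of_pos (div_pos hq hp) hqp) hp
    rwa [log_div hq.ne' hp.ne', mul_sub, mul_sub, mul_one, mul_div_cancel₀ q hp.ne'] at this

lemma mul_log_sub_mul_log_le {p q : ℝ} (hp : 0 ≤ p) (hq : 0 < q) :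
    p * log q - p * log p ≤ q - p := by
  rcases eq_or_ne p q with rfl | hpq
  · simp
  · exact (mul_log_sub_mul_log_lt hp hq hpq).le

section Gibbs

variable {ι : Type*} [Fintype ι] {p q : ι → ℝ}

theorem sum_mul_log_le_sum_mul_log (hp : ∀ i, 0 ≤ p i) (hq : ∀ i, 0 < q i)
    (hpq : ∑ i, p i = ∑ i, q i) : ∑ i, p i * log (q i) ≤ ∑ i, p i * log (p i) := by
  have := sum_le_sum fun i (_ : i ∈ univ) => mul_log_sub_mul_log_le (hp i) (hq i)
  rw [sum_sub_distrib, sum_sub_distrib, hpq, sub_self] at this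
  linarith

theorem sum_mul_log_lt_sum_mul_log (hp : ∀ i, 0 ≤ p i) (hq : ∀ i, 0 < q i)
    (hpq : ∑ i, p i = ∑ i, q i) (hne : p ≠ q) :
    ∑ i, p i * log (q i) < ∑ i, p i * log (p i) := by
  obtain ⟨j, hj⟩ := Function.ne_iff.mp hne
  have := sum_lt_sum (fun i (_ : i ∈ univ) => mul_log_sub_mul_log_le (hp i) (hq i))
    ⟨j, mem_univ j, mul_log_sub_mul_log_lt (hp j) (hq j) hj⟩
  rw [sum_sub_distrib, sum_sub_distrib, hpq, sub_self] at this
  linarith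

end Gibbs

section Bell

variable {b : ℝ}

lemma pstar_nonneg (hb : |b| ≤ 1) (k : Fin 4) : 0 ≤ pstar b k := by
  have := (sq_le_one_iff_abs_le_one b).mpr hb
  fin_cases k <;> simp only [pstar, Fin.mk_one, Fin.reduceFinMk, Matrix.cons_val] <;> positivity

lemma pstar_pos (hb : |b| < 1) (k : Fin 4) : 0 < pstar b k := by
  obtain ⟨hb₁, hb₂⟩ := abs_lt.mp hb
  have := (sq_lt_one_iff_abs_lt_one b).mpr hb
  fin_cases k <;> simp only [pstar, Fin.mk_one, Fin.reduceFinMk, Matrix.cons_val] <;> nlinarith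

lemma sum_pstar (b : ℝ) : ∑ k, pstar b k = 1 := by
  simp only [pstar, Fin.sum_univ_four, Fin.isValue, Matrix.cons_val_zero, Matrix.cons_val_one,
    Matrix.cons_val]
  ring

lemma pstar_zero_sub_pstar_one (b : ℝ) : pstar b 0 - pstar b 1 = b := by
  simp only [pstar, Fin.isValue, Matrix.cons_val_zero, Matrix.cons_val_one]
  ring

variable {p : Fin 4 → ℝ}

lemma sum_mul_log_pstar (hb : |b| < 1) (hs : ∑ k, p k = 1) (hc : p 0 - p 1 = b) :
    ∑ k, p k * log (pstar b k) = (1 + b) * log ((1 + b) / 2) + (1 - b) * log ((1 - b) / 2) := by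
  obtain ⟨hb₁, hb₂⟩ := abs_lt.mp hb
  have hA : (1 + b) / 2 ≠ 0 := by intro h; linarith
  have hB : (1 - b) / 2 ≠ 0 := by intro h; linarith
  have hsq : ∀ x : ℝ, x ^ 2 / 4 = (x / 2) ^ 2 := fun x => by ring
  have hmix : (1 - b ^ 2) / 4 = (1 + b) / 2 * ((1 - b) / 2) := by ring
  simp only [Fin.sum_univ_four, pstar, Matrix.cons_val, hsq, log_pow, hmix, log_mul hA hB]
  rw [Fin.sum_univ_four] at hs
  linear_combination (log ((1 + b) / 2) + log ((1 - b) / 2)) * hs +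
    (log ((1 + b) / 2) - log ((1 - b) / 2)) * hc

lemma eq_pstar_of_abs_eq_one (hb : |b| = 1) (hp : ∀ k, 0 ≤ p k) (hs : ∑ k, p k = 1)
    (hc : p 0 - p 1 = b) : p = pstar b := by
  have hb2 : b ^ 2 = 1 := by rw [← sq_abs, hb, one_pow]
  rw [Fin.sum_univ_four] at hs
  have h01 : |p 0 - p 1| ≤ p 0 + p 1 :=
    abs_sub_le_iff.mpr ⟨by linarith [hp 1], by linarith [hp 0]⟩
  rw [hc, hb] at h01
  have h2 : p 2 = 0 := by linarith [hp 2, hp 3]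
  have h3 : p 3 = 0 := by linarith [hp 2, hp 3]
  have h0 : p 0 = (1 + b) / 2 := by linarith
  have h1 : p 1 = (1 - b) / 2 := by linarith
  funext k
  fin_cases k <;> simp only [pstar, h0, h1, h2, h3, Fin.mk_one,
    Fin.reduceFinMk, Matrix.cons_val] <;> linarith

end Bell

/-- maximizing the Shannon entropy over probability 4-vectors subject to
p_{Φ+} - p_{Ψ-} = b (|b| ≤ 1) yields the unique maximizer `pstar b`. -/
theorem shannon_maxent_bell (b : ℝ) (hb : |b| ≤ 1) :
    (∀ k, 0 ≤ pstar b k) ∧ (∑ k, pstar b k = 1) ∧ (pstar b 0 - pstar b 1 = b) ∧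
    ∀ p : Fin 4 → ℝ, (∀ k, 0 ≤ p k) → ∑ k, p k = 1 → p 0 - p 1 = b →
      (-∑ k, p k * Real.log (p k)) ≤ (-∑ k, pstar b k * Real.log (pstar b k)) ∧
      ((-∑ k, p k * Real.log (p k)) = (-∑ k, pstar b k * Real.log (pstar b k))
        → p = pstar b) := by
  refine ⟨pstar_nonneg hb, sum_pstar b, pstar_zero_sub_pstar_one b, fun p hp hs hc => ?_⟩
  rcases hb.eq_or_lt with hb_one | hb_lt
  · obtain rfl := eq_pstar_of_abs_eq_one hb_one hp hs hc
    exact ⟨le_rfl, fun _ => rfl⟩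
  have hq := pstar_pos hb_lt
  have hsum : ∑ k, p k = ∑ k, pstar b k := hs.trans (sum_pstar b).symm
  have hcross : ∑ k, p k * log (pstar b k) = ∑ k, pstar b k * log (pstar b k) := by
    rw [sum_mul_log_pstar hb_lt hs hc,
      sum_mul_log_pstar hb_lt (sum_pstar b) (pstar_zero_sub_pstar_one b)]
  refine ⟨?_, fun heq => by_contra fun hne => ?_⟩
  · linarith [sum_mul_log_le_sum_mul_log hp hq hsum]
  · linarith [sum_mul_log_lt_sum_mul_log hp hq hsum hne]
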